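/- If ‖∇f(x) - g̃(x)‖ ≤ Δ, then ‖∇f(x)‖² ≥ ‖g̃(x)‖²/2 - Δ², and consequently the inexact gradient step with step size 1/L on an L-smooth function satisfies f(x_{k+1}) - f(x_k) ≤ Δ²/L - ‖g̃(x_k)‖²/(4L). -/

import Mathlib

/-!
The descent lemma `f (x + v) ≤ f x + ⟪∇f x, v⟫ + L/2 ‖v‖²` follows from the monotonicity of
`t ↦ f (x + t v) - t ⟪∇f x, v⟫ - L/2 t² ‖v‖²`, whose derivative is `≤ 0` by Cauchy–Schwarz and
the Lipschitz bound on `∇f`. For `v = -g / L` the resulting bound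
`(‖g‖²/2 - ⟪∇f x, g⟫) / L` differs from `(‖∇f x - g‖² - ‖g‖²/4) / L` by `-‖∇f x - g/2‖² / L ≤ 0`.
-/

open scoped RealInnerProductSpace

lemma norm_sq_div_two_sub_sq_le_norm_sq {E : Type*} [SeminormedAddCommGroup E] {u w : E} {Δ : ℝ}
    (h : ‖u - w‖ ≤ Δ) : ‖w‖ ^ 2 / 2 - Δ ^ 2 ≤ ‖u‖ ^ 2 := by
  have hw : ‖w‖ ≤ ‖u‖ + ‖u - w‖ := by
    simpa only [norm_sub_rev w u] using norm_le_norm_add_norm_sub' w u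
  have hsq : ‖u - w‖ ^ 2 ≤ Δ ^ 2 := pow_le_pow_left₀ (norm_nonneg _) h 2
  nlinarith [add_sq_le (a := ‖u‖) (b := ‖u - w‖), norm_nonneg w]

section Descent

variable {E : Type*} [NormedAddCommGroup E] [InnerProductSpace ℝ E] [CompleteSpace E]
  {f : E → ℝ} {L : ℝ}

lemma hasDerivAt_comp_add_smul (hf : Differentiable ℝ f) (x v : E) (t : ℝ) :
    HasDerivAt (fun s : ℝ => f (x + s • v)) ⟪gradient f (x + t • v), v⟫ t := by
  have hline : HasDerivAt (fun s : ℝ => x + s • v) v t := by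
    simpa using ((hasDerivAt_id t).smul_const v).const_add x
  simpa [Function.comp_def] using
    (hf (x + t • v)).hasGradientAt.hasFDerivAt.comp_hasDerivAt t hline

theorem apply_add_le_of_lipschitz_gradient (hf : Differentiable ℝ f)
    (hlip : ∀ x y, ‖gradient f x - gradient f y‖ ≤ L * ‖x - y‖) (x v : E) :
    f (x + v) ≤ f x + ⟪gradient f x, v⟫ + L / 2 * ‖v‖ ^ 2 := by
  set φ : ℝ → ℝ := fun t => f (x + t • v) - t * ⟪gradient f x, v⟫ - L / 2 * t ^ 2 * ‖v‖ ^ 2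
  have hφ' : ∀ t, HasDerivAt φ (⟪gradient f (x + t • v) - gradient f x, v⟫ - L * t * ‖v‖ ^ 2) t := by
    intro t
    refine (((hasDerivAt_comp_add_smul hf x v t).sub
      ((hasDerivAt_id t).mul_const ⟪gradient f x, v⟫)).sub
      (((hasDerivAt_pow 2 t).const_mul (L / 2)).mul_const (‖v‖ ^ 2))).congr_deriv ?_
    simp only [inner_sub_left, Nat.cast_ofNat]
    ring
  have hφ'_nonpos : ∀ t ∈ interior (Set.Ici (0 : ℝ)),
      ⟪gradient f (x + t • v) - gradient f x, v⟫ - L * t * ‖v‖ ^ 2 ≤ 0 := by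
    intro t ht
    rw [interior_Ici, Set.mem_Ioi] at ht
    calc ⟪gradient f (x + t • v) - gradient f x, v⟫ - L * t * ‖v‖ ^ 2
        ≤ ‖gradient f (x + t • v) - gradient f x‖ * ‖v‖ - L * t * ‖v‖ ^ 2 := by
          gcongr; exact real_inner_le_norm _ _
      _ ≤ L * ‖t • v‖ * ‖v‖ - L * t * ‖v‖ ^ 2 := by
          gcongr; simpa only [add_sub_cancel_left] using hlip (x + t • v) x
      _ = 0 := by rw [norm_smul, Real.norm_of_nonneg ht.le]; ring
  have hanti : AntitoneOn φ (Set.Ici 0) :=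
    antitoneOn_of_hasDerivWithinAt_nonpos (convex_Ici 0)
      (HasDerivAt.continuousOn fun t _ => hφ' t) (fun t _ => (hφ' t).hasDerivWithinAt) hφ'_nonpos
  have := hanti Set.self_mem_Ici (Set.mem_Ici.2 zero_le_one) zero_le_one
  simp only [φ, one_smul, zero_smul, add_zero, one_pow, one_mul, zero_pow two_ne_zero, mul_zero,
    zero_mul, sub_zero] at this
  linarith

theorem apply_sub_smul_sub_le_of_lipschitz_gradient (hf : Differentiable ℝ f)
    (hlip : ∀ x y, ‖gradient f x - gradient f y‖ ≤ L * ‖x - y‖) (hL : 0 < L) (x g : E) :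
    f (x - (1 / L) • g) - f x ≤ ‖gradient f x - g‖ ^ 2 / L - ‖g‖ ^ 2 / (4 * L) := by
  have hdesc : f (x - (1 / L) • g) - f x ≤ (‖g‖ ^ 2 / 2 - ⟪gradient f x, g⟫) / L := by
    have := apply_add_le_of_lipschitz_gradient hf hlip x (-(1 / L) • g)
    rw [neg_smul, ← sub_eq_add_neg, inner_neg_right, inner_smul_right, norm_neg, norm_smul,
      Real.norm_of_nonneg (by positivity)] at this
    field_simp at this ⊢
    linarith
  have hcomplete_square : ‖g‖ ^ 2 / 2 - ⟪gradient f x, g⟫ ≤ ‖gradient f x - g‖ ^ 2 - ‖g‖ ^ 2 / 4 := by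
    have := sq_nonneg ‖gradient f x - (1 / 2 : ℝ) • g‖
    rw [norm_sub_sq_real] at this ⊢
    rw [inner_smul_right, norm_smul, Real.norm_of_nonneg (by norm_num)] at this
    nlinarith
  calc f (x - (1 / L) • g) - f x ≤ (‖g‖ ^ 2 / 2 - ⟪gradient f x, g⟫) / L := hdesc
    _ ≤ (‖gradient f x - g‖ ^ 2 - ‖g‖ ^ 2 / 4) / L := by gcongr
    _ = ‖gradient f x - g‖ ^ 2 / L - ‖g‖ ^ 2 / (4 * L) := by ring

end Descent

theorem stmt6_general {n : ℕ} (f : EuclideanSpace ℝ (Fin n) → ℝ) (L Δ : ℝ)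
    (hL : 0 < L)
    (hdiff : Differentiable ℝ f)
    (hlip : ∀ x y, ‖gradient f x - gradient f y‖ ≤ L * ‖x - y‖)
    (gt : EuclideanSpace ℝ (Fin n) → EuclideanSpace ℝ (Fin n))
    (herr : ∀ z, ‖gradient f z - gt z‖ ≤ Δ)
    (xk xk1 : EuclideanSpace ℝ (Fin n))
    (hstep : xk1 = xk - (1 / L) • gt xk) :
    (∀ z, ‖gradient f z‖ ^ 2 ≥ ‖gt z‖ ^ 2 / 2 - Δ ^ 2) ∧
    f xk1 - f xk ≤ Δ ^ 2 / L - ‖gt xk‖ ^ 2 / (4 * L) := by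
  refine ⟨fun z => norm_sq_div_two_sub_sq_le_norm_sq (herr z), ?_⟩
  calc f xk1 - f xk ≤ ‖gradient f xk - gt xk‖ ^ 2 / L - ‖gt xk‖ ^ 2 / (4 * L) :=
        hstep ▸ apply_sub_smul_sub_le_of_lipschitz_gradient hdiff hlip hL xk (gt xk)
    _ ≤ Δ ^ 2 / L - ‖gt xk‖ ^ 2 / (4 * L) := by gcongr; exact herr xk

theorem stmt6 {n : ℕ} (f : EuclideanSpace ℝ (Fin n) → ℝ) (L Δ : ℝ)
    (hL : 0 < L) (hΔ : 0 ≤ Δ)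
    (hdiff : Differentiable ℝ f)
    (hlip : ∀ x y, ‖gradient f x - gradient f y‖ ≤ L * ‖x - y‖)
    (gt : EuclideanSpace ℝ (Fin n) → EuclideanSpace ℝ (Fin n))
    (herr : ∀ z, ‖gradient f z - gt z‖ ≤ Δ)
    (xk xk1 : EuclideanSpace ℝ (Fin n))
    (hstep : xk1 = xk - (1 / L) • gt xk) :
    (∀ z, ‖gradient f z‖ ^ 2 ≥ ‖gt z‖ ^ 2 / 2 - Δ ^ 2) ∧
    f xk1 - f xk ≤ Δ ^ 2 / L - ‖gt xk‖ ^ 2 / (4 * L) :=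
  stmt6_general f L Δ hL hdiff hlip gt herr xk xk1 hstep
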